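/- arXiv:2106.01774 — 2 statements merged into one kernel-verified Lean document; each statement's English description precedes it below -/
import Mathlib

section
/- Let n ≥ 2. Then every minimal vertex cover of the path P_n contains either x_n or x_{n−1}, but not both. Consequently, if U and V are s-fold products of minimal generators of J(P_n) (i.e., U, V ∈ F(J(P_n)^s)) and U divides V, then the exponent of x_n in U equals the exponent of x_n in V, and the exponent of x_{n−1} in U equals the exponent of x_{n−1} in V. -/
/-
The vertex `x_n` lies on the single edge `{x_{n-1}, x_n}`. So every cover contains `x_{n-1}`
or `x_n`, and a cover containing `x_{n-1}` stays a cover after dropping `x_n`: a minimal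
cover contains exactly one of the two. Membership of a monomial in `J(P_n)` depends only on
its support, so the same removal argument (lowering the exponent of `x_n` or `x_{n-1}` by one)
shows that every minimal generator `x^a` has `a_n + a_{n-1} = 1`. Hence every `s`-fold
product has `a_n + a_{n-1} = s`, and if `U ∣ V` the exponents of `U` are bounded by those of
`V`, so equal sums force equality in both coordinates.
-/

open MvPolynomial

noncomputable section

/-- The cover ideal of the path graph `P_n` on vertices `x_1, …, x_n`:
the intersection of the ideals `(x_i, x_{i+1})` over the edges of the path. -/
def pathCoverIdeal (k : Type*) [Field k] (n : ℕ) : Ideal (MvPolynomial ℕ k) :=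
  ⨅ i ∈ Finset.Icc 1 (n - 1), Ideal.span {(X i : MvPolynomial ℕ k), X (i + 1)}

/-- A monomial with coefficient `1`. -/
def IsMonomial {k : Type*} [Field k] (m : MvPolynomial ℕ k) : Prop :=
  ∃ a : ℕ →₀ ℕ, m = monomial a 1

/-- The minimal monomial generating set `G(I)` of a monomial ideal `I`:
monomials of `I` that are not strictly divisible by another monomial of `I`. -/
def minGens {k : Type*} [Field k] (I : Ideal (MvPolynomial ℕ k)) :
    Set (MvPolynomial ℕ k) :=
  {m | IsMonomial m ∧ m ∈ I ∧ ∀ m', IsMonomial m' → m' ∈ I → m' ∣ m → m' = m}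

/-- The rooted list `R(P_n)` of the path `P_n`. -/
def rootedList (k : Type*) [Field k] : ℕ → List (MvPolynomial ℕ k)
  | 0 => [1]
  | 1 => [1]
  | 2 => [X 1, X 2]
  | 3 => [X 2, X 1 * X 3]
  | (n + 4) =>
      ((rootedList k (n + 2)).map fun u => X (n + 3) * u) ++
      ((rootedList k (n + 1)).map fun u => X (n + 4) * X (n + 2) * u)

/-- `F(I^s)`: the set of `s`-fold products of minimal generators of `I`. -/
def sFold {k : Type*} [Field k] (I : Ideal (MvPolynomial ℕ k)) (s : ℕ) :
    Set (MvPolynomial ℕ k) :=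
  {m | ∃ L : List (MvPolynomial ℕ k), L.length = s ∧ (∀ u ∈ L, u ∈ minGens I) ∧ m = L.prod}

/-- `a >_lex b`: the first entry where `a` and `b` differ is bigger in `a`. -/
def lexGt (a b : ℕ → ℕ) : Prop :=
  ∃ t, (∀ j, j < t → a j = b j) ∧ b t < a t

/-- `a` is an exponent-vector expression of `M` as an `s`-fold product of the terms of
the list `L`. -/
def IsExprOn {k : Type*} [Field k] (L : List (MvPolynomial ℕ k)) (s : ℕ) (a : ℕ → ℕ)
    (M : MvPolynomial ℕ k) : Prop :=
  (∀ i, L.length ≤ i → a i = 0) ∧ (∑ i ∈ Finset.range L.length, a i) = s ∧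
    M = ∏ i ∈ Finset.range L.length, (L.getD i 1) ^ (a i)

/-- `a` is the (lexicographically) maximal expression of `M` as an `s`-fold product of
the terms of the list `L`. -/
def IsMaxExpr {k : Type*} [Field k] (L : List (MvPolynomial ℕ k)) (s : ℕ) (a : ℕ → ℕ)
    (M : MvPolynomial ℕ k) : Prop :=
  IsExprOn L s a M ∧ ∀ b, IsExprOn L s b M → b ≠ a → lexGt a b

/-- The rooted order `M >_R N` on `s`-fold products, relative to the list `L` of
minimal generators: maximal expressions are compared lexicographically. -/
def rootedGt {k : Type*} [Field k] (L : List (MvPolynomial ℕ k)) (s : ℕ)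
    (M N : MvPolynomial ℕ k) : Prop :=
  ∃ a b, IsMaxExpr L s a M ∧ IsMaxExpr L s b N ∧ lexGt a b

/-- An ideal is generated by a subset of the variables. -/
def genByVars {k : Type*} [Field k] (I : Ideal (MvPolynomial ℕ k)) : Prop :=
  ∃ T : Set ℕ, I = Ideal.span ((fun i => (X i : MvPolynomial ℕ k)) '' T)

end

/-- A vertex cover of the path `P_n` (vertices `x_1, …, x_n`, identified with the
indices `1, …, n`): a set of vertices meeting every edge `{x_i, x_{i+1}}`. -/
def IsVertexCover (n : ℕ) (C : Set ℕ) : Prop :=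
  C ⊆ Set.Icc 1 n ∧ ∀ i ∈ Finset.Icc 1 (n - 1), i ∈ C ∨ i + 1 ∈ C

/-- A minimal vertex cover of `P_n`. -/
def IsMinVertexCover (n : ℕ) (C : Set ℕ) : Prop :=
  IsVertexCover n C ∧ ∀ D, IsVertexCover n D → D ⊆ C → D = C

/-- The second conjunct of `IsVertexCover`, on its own: the support of a monomial of
`pathCoverIdeal k n` satisfies it but need not lie in `Set.Icc 1 n`. -/
def CoversPathEdges (n : ℕ) (C : Set ℕ) : Prop :=
  ∀ i ∈ Finset.Icc 1 (n - 1), i ∈ C ∨ i + 1 ∈ C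

namespace CoversPathEdges

variable {n : ℕ} {C D : Set ℕ}

theorem mono (hCD : C ⊆ D) (hC : CoversPathEdges n C) : CoversPathEdges n D :=
  fun i hi => (hC i hi).imp (@hCD i) (@hCD (i + 1))

theorem last_or_pred_mem (hn : 2 ≤ n) (hC : CoversPathEdges n C) : n ∈ C ∨ n - 1 ∈ C := by
  have hedge := hC (n - 1) (Finset.mem_Icc.2 ⟨by omega, le_rfl⟩)
  rwa [Nat.sub_add_cancel (by omega), or_comm] at hedge

theorem diff_last (hC : CoversPathEdges n C) (hpred : n - 1 ∈ C) :
    CoversPathEdges n (C \ {n}) := by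
  intro i hi
  have hi' := Finset.mem_Icc.1 hi
  simp only [Set.mem_sdiff, Set.mem_singleton_iff]
  by_cases hlast : i = n - 1
  · exact Or.inl ⟨hlast ▸ hpred, by omega⟩
  · exact (hC i hi).imp (⟨·, by omega⟩) (⟨·, by omega⟩)

end CoversPathEdges

theorem IsMinVertexCover.xor_last_pred_mem {n : ℕ} {C : Set ℕ} (hn : 2 ≤ n)
    (hC : IsMinVertexCover n C) : Xor (n ∈ C) (n - 1 ∈ C) := by
  obtain ⟨⟨hsub, hcov⟩, hmin⟩ := hC
  have not_both : ¬(n ∈ C ∧ n - 1 ∈ C) := fun ⟨hlast, hpred⟩ => by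
    have hD : IsVertexCover n (C \ {n}) :=
      ⟨Set.sdiff_subset.trans hsub, CoversPathEdges.diff_last hcov hpred⟩
    have : n ∈ C \ {n} := by rwa [hmin _ hD Set.sdiff_subset]
    exact this.2 rfl
  rcases CoversPathEdges.last_or_pred_mem hn hcov with hlast | hpred
  · exact Or.inl ⟨hlast, fun hpred => not_both ⟨hlast, hpred⟩⟩
  · exact Or.inr ⟨hpred, fun hlast => not_both ⟨hlast, hpred⟩⟩

theorem monomial_mem_pathCoverIdeal_iff {k : Type*} [Field k] {n : ℕ} {a : ℕ →₀ ℕ} :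
    (monomial a 1 : MvPolynomial ℕ k) ∈ pathCoverIdeal k n ↔
      CoversPathEdges n ↑a.support := by
  classical
  simp only [pathCoverIdeal, Ideal.mem_iInf]
  refine forall₂_congr fun i _ => ?_
  rw [← Set.image_pair, mem_ideal_span_X_image, support_monomial, if_neg one_ne_zero]
  simp

theorem monomial_tsub_single_notMem_of_mem_minGens {k : Type*} [Field k]
    {I : Ideal (MvPolynomial ℕ k)} {a : ℕ →₀ ℕ} (ha : monomial a 1 ∈ minGens I) {j : ℕ}
    (hj : a j ≠ 0) : monomial (a - Finsupp.single j 1) 1 ∉ I := by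
  intro hmem
  have hdvd : (monomial (a - Finsupp.single j 1) 1 : MvPolynomial ℕ k) ∣ monomial a 1 :=
    monomial_dvd_monomial.2 ⟨Or.inr tsub_le_self, dvd_rfl⟩
  have heq := monomial_left_injective one_ne_zero (ha.2.2 _ ⟨_, rfl⟩ hmem hdvd)
  have := DFunLike.congr_fun heq j
  simp only [Finsupp.tsub_apply, Finsupp.single_eq_same] at this
  omega

theorem Finsupp.support_diff_subset_support_tsub_single {α : Type*} (a : α →₀ ℕ) (j : α) :
    ↑a.support \ {j} ⊆ (↑(a - Finsupp.single j 1).support : Set α) := by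
  rintro i ⟨hi, hij⟩
  simp_all

theorem Finsupp.support_subset_support_tsub_single {α : Type*} {a : α →₀ ℕ} {j : α}
    (hj : 2 ≤ a j) : a.support ⊆ (a - Finsupp.single j 1).support := by
  intro i hi
  by_cases hij : i = j
  · subst hij
    simp only [Finsupp.mem_support_iff, Finsupp.tsub_apply, Finsupp.single_eq_same]
    omega
  · simp_all

theorem add_eq_one_of_mem_minGens_pathCoverIdeal {k : Type*} [Field k] {n : ℕ} (hn : 2 ≤ n)
    (a : ℕ →₀ ℕ) (ha : monomial a 1 ∈ minGens (pathCoverIdeal k n)) :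
    a n + a (n - 1) = 1 := by
  have hcov := monomial_mem_pathCoverIdeal_iff.1 ha.2.1
  have hpos : a n ≠ 0 ∨ a (n - 1) ≠ 0 := by
    simpa using CoversPathEdges.last_or_pred_mem hn hcov
  by_contra hne
  obtain ⟨j, hj, hcov'⟩ :
      ∃ j, a j ≠ 0 ∧ CoversPathEdges n ↑(a - Finsupp.single j 1).support := by
    by_cases hboth : a n ≠ 0 ∧ a (n - 1) ≠ 0
    · exact ⟨n, hboth.1, (hcov.diff_last (by simpa using hboth.2)).mono
        (Finsupp.support_diff_subset_support_tsub_single a n)⟩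
    · obtain ⟨j, hj⟩ : ∃ j, 2 ≤ a j := if h : 2 ≤ a n then ⟨n, h⟩ else ⟨n - 1, by omega⟩
      exact ⟨j, by omega, hcov.mono <| Finset.coe_subset.2 <|
        Finsupp.support_subset_support_tsub_single hj⟩
  exact monomial_tsub_single_notMem_of_mem_minGens ha hj (monomial_mem_pathCoverIdeal_iff.2 hcov')

theorem exists_monomial_add_eq_of_mem_sFold {k : Type*} [Field k]
    {I : Ideal (MvPolynomial ℕ k)} {i j : ℕ}
    (hI : ∀ a : ℕ →₀ ℕ, monomial a 1 ∈ minGens I → a i + a j = 1) {s : ℕ}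
    {U : MvPolynomial ℕ k} (hU : U ∈ sFold I s) :
    ∃ A : ℕ →₀ ℕ, U = monomial A 1 ∧ A i + A j = s := by
  obtain ⟨L, rfl, hL, rfl⟩ := hU
  induction L with
  | nil => exact ⟨0, by simp, by simp⟩
  | cons u L ih =>
    obtain ⟨A, hA, hAs⟩ := ih fun v hv => hL v (List.mem_cons_of_mem _ hv)
    obtain ⟨a, rfl⟩ := (hL u List.mem_cons_self).1
    have ha := hI a (hL _ List.mem_cons_self)
    refine ⟨a + A, by rw [List.prod_cons, hA, monomial_mul, one_mul], ?_⟩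
    simp only [Finsupp.add_apply, List.length_cons]
    omega

/-- For `n ≥ 2`, every minimal vertex cover of `P_n` contains `x_n` or
`x_{n-1}` but not both; consequently, if `U, V ∈ F(J(P_n)^s)` and `U ∣ V`, then the
exponents of `x_n` (resp. `x_{n-1}`) in `U` and `V` coincide. -/
theorem minimal_cover_xor_and_divisor_same_type (k : Type*) [Field k]
    (n : ℕ) (hn : 2 ≤ n) :
    (∀ C, IsMinVertexCover n C → Xor' (n ∈ C) (n - 1 ∈ C)) ∧
    (∀ s : ℕ, ∀ U V : MvPolynomial ℕ k,
      U ∈ sFold (pathCoverIdeal k n) s → V ∈ sFold (pathCoverIdeal k n) s → U ∣ V →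
        degreeOf n U = degreeOf n V ∧ degreeOf (n - 1) U = degreeOf (n - 1) V) := by
  refine ⟨fun C hC => hC.xor_last_pred_mem hn, fun s U V hU hV hUV => ?_⟩
  have hgens := add_eq_one_of_mem_minGens_pathCoverIdeal (k := k) hn
  obtain ⟨A, rfl, hA⟩ := exists_monomial_add_eq_of_mem_sFold hgens hU
  obtain ⟨B, rfl, hB⟩ := exists_monomial_add_eq_of_mem_sFold hgens hV
  have hAB : A ≤ B := (monomial_dvd_monomial.1 hUV).1.resolve_left one_ne_zero
  simp only [degreeOf_monomial_eq _ _ one_ne_zero]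
  have := hAB n
  have := hAB (n - 1)
  omega
end

section
/- Let n ≥ 3 and s ≥ 1. Then monomials U, V belong to F(J(P_{n−2})^s) if and only if x_{n−1}^s·U and x_{n−1}^s·V belong to F(J(P_n)^s). Moreover, in that case: (1) U >_R V in the rooted order on F(J(P_{n−2})^s) if and only if x_{n−1}^s·U >_R x_{n−1}^s·V in the rooted order on F(J(P_n)^s); and (2) U ∈ G(J(P_{n−2})^s) if and only if x_{n−1}^s·U ∈ G(J(P_n)^s). -/
open MvPolynomial

/-!
Minimal generators of `J(P_n)` are the squarefree monomials of minimal vertex covers, and those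
divisible by `x_{n-1}` are exactly `x_{n-1} w` with `w` a minimal generator of `J(P_{n-2})`. Each
has `x_{n-1}`-degree at most one, so an `s`-fold product divisible by `x_{n-1}^s` is built from
such generators only.

For `G(J^s)` we compare the monomials of `J(P_n)^s` dividing `x_{n-1}^s U` with those of
`J(P_{n-2})^s` dividing `U`: `x_{n-1} J(P_{n-2}) ⊆ J(P_n)`, and setting `x_n = 0` maps `J(P_n)`
into `x_{n-1} J(P_{n-2})`, so the former are `x_{n-1}^s` times the latter.

Finally `R(P_n)` is `x_{n-1} R(P_{n-2})` followed by terms divisible by `x_n`, which cannot occur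
in an expression of `x_{n-1}^s U`; so expressions, maximal expressions and the rooted order
correspond.
-/

theorem minimal_iff_minimal_add {α : Type*} [AddCommMonoid α] [PartialOrder α]
    [IsOrderedCancelAddMonoid α] {P Q : α → Prop} {u c : α}
    (hPQ : ∀ f, P f → Q (f + c)) (hQP : ∀ g ≤ u + c, Q g → ∃ f, g = f + c ∧ P f) :
    Minimal P u ↔ Minimal Q (u + c) := by
  constructor
  · refine fun hu => ⟨hPQ u hu.1, fun g hg hle => ?_⟩
    obtain ⟨f, rfl, hf⟩ := hQP g hle hg
    exact add_le_add (hu.2 hf (le_of_add_le_add_right hle)) le_rfl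
  · intro hu
    obtain ⟨f, hfu, hf⟩ := hQP (u + c) le_rfl hu.1
    obtain rfl : u = f := add_right_cancel hfu
    exact ⟨hf, fun g hg hle => le_of_add_le_add_right (hu.2 (hPQ g hg) (add_le_add hle le_rfl))⟩

theorem List.eq_one_of_length_le_sum {l : List ℕ} (h1 : ∀ x ∈ l, x ≤ 1)
    (hl : l.length ≤ l.sum) : ∀ x ∈ l, x = 1 := by
  induction l with
  | nil => simp
  | cons a l ih =>
    simp only [List.forall_mem_cons, List.length_cons, List.sum_cons] at h1 hl ⊢
    have hsum : l.sum ≤ l.length := by simpa using l.sum_le_card_nsmul 1 h1.2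
    exact ⟨by omega, ih h1.2 (by omega)⟩

section

variable {σ R : Type*} [CommSemiring R]

theorem sum_map_add_single (E : List (σ →₀ ℕ)) (i : σ) :
    (E.map (· + Finsupp.single i 1)).sum = E.sum + Finsupp.single i E.length := by
  simp [List.sum_map_add]

theorem X_pow_mul_monomial (i : σ) (s : ℕ) (u : σ →₀ ℕ) :
    (X i : MvPolynomial σ R) ^ s * monomial u 1 = monomial (u + Finsupp.single i s) 1 := by
  rw [X_pow_eq_monomial, monomial_mul, one_mul, add_comm]

theorem list_prod_map_monomial_one (E : List (σ →₀ ℕ)) :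
    (E.map (monomial · (1 : R))).prod = monomial E.sum 1 := by
  induction E with
  | nil => simp
  | cons e E ih => rw [List.map_cons, List.prod_cons, ih, List.sum_cons, monomial_mul, one_mul]

theorem X_not_dvd_X_pow_mul_monomial [Nontrivial R] {i j : σ} {s : ℕ} {u : σ →₀ ℕ}
    (hij : i ≠ j) (hu : u i = 0) : ¬(X i : MvPolynomial σ R) ∣ X j ^ s * monomial u 1 := by
  rw [X_pow_mul_monomial, X, monomial_dvd_monomial, Finsupp.single_le_iff, Finsupp.add_apply, hu,
    Finsupp.single_eq_of_ne hij]
  simp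

theorem monomial_mem_span_X_pair_iff [Nontrivial R] (d : σ →₀ ℕ) (i j : σ) :
    monomial d (1 : R) ∈ Ideal.span {(X i : MvPolynomial σ R), X j} ↔
      d i ≠ 0 ∨ d j ≠ 0 := by
  classical
  simp [← Set.image_pair, mem_ideal_span_X_image, support_monomial]

theorem mem_span_X_pair_of_X_mul_mem {i j l : σ} (hi : l ≠ i) (hj : l ≠ j)
    {q : MvPolynomial σ R} (h : X l * q ∈ Ideal.span {(X i : MvPolynomial σ R), X j}) :
    q ∈ Ideal.span {(X i : MvPolynomial σ R), X j} := by
  rw [← Set.image_pair, mem_ideal_span_X_image] at h ⊢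
  intro d hd
  obtain ⟨a, ha, had⟩ := h (Finsupp.single l 1 + d) (by
    rw [support_X_mul]; exact Finset.mem_map_of_mem _ hd)
  refine ⟨a, ha, ?_⟩
  rcases ha with rfl | rfl <;> simpa [Finsupp.single_eq_of_ne, hi, hj] using had

variable [DecidableEq σ]

noncomputable def killX (i : σ) : MvPolynomial σ R →ₐ[R] MvPolynomial σ R :=
  aeval (Function.update X i 0)

theorem killX_X_self (i : σ) : killX i (X i : MvPolynomial σ R) = 0 := by
  rw [killX, aeval_X, Function.update_self]

theorem killX_X_of_ne {i j : σ} (h : j ≠ i) : killX i (X j : MvPolynomial σ R) = X j := by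
  rw [killX, aeval_X, Function.update_of_ne h]

theorem killX_monomial {i : σ} {g : σ →₀ ℕ} (hg : g i = 0) :
    killX i (monomial g (1 : R)) = monomial g 1 := by
  rw [killX, aeval_monomial, monomial_eq, map_one, C_1]
  refine congrArg _ (Finsupp.prod_congr fun j hj => ?_)
  rw [Function.update_of_ne (by rintro rfl; exact Finsupp.mem_support_iff.mp hj hg)]

end

section

variable {k : Type*} [Field k]

def IsPathCover (N : ℕ) (d : ℕ →₀ ℕ) : Prop :=
  ∀ i ∈ Finset.Icc 1 (N - 1), d i ≠ 0 ∨ d (i + 1) ≠ 0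

theorem monomial_mem_pathCoverIdeal_iff_s3 (N : ℕ) (d : ℕ →₀ ℕ) :
    monomial d (1 : k) ∈ pathCoverIdeal k N ↔ IsPathCover N d := by
  simp only [pathCoverIdeal, Ideal.mem_iInf, monomial_mem_span_X_pair_iff, IsPathCover]

theorem monomial_mem_minGens_iff (I : Ideal (MvPolynomial ℕ k)) (d : ℕ →₀ ℕ) :
    monomial d (1 : k) ∈ minGens I ↔ Minimal (fun f => monomial f (1 : k) ∈ I) d := by
  rw [minimal_iff]
  refine ⟨fun h => ⟨h.2.1, fun f hf hfd => ?_⟩, fun h => ⟨⟨d, rfl⟩, h.1, ?_⟩⟩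
  · have hdvd : monomial f (1 : k) ∣ monomial d 1 :=
      monomial_dvd_monomial.mpr ⟨Or.inr hfd, one_dvd _⟩
    exact ((monomial_left_injective one_ne_zero).eq_iff.mp (h.2.2 _ ⟨f, rfl⟩ hf hdvd)).symm
  · rintro _ ⟨f, rfl⟩ hf hdvd
    rcases monomial_dvd_monomial.mp hdvd with ⟨h1 | hfd, -⟩
    · exact absurd h1 one_ne_zero
    · rw [h.2 hf hfd]

theorem mem_minGens_pathCoverIdeal_iff (N : ℕ) (w : MvPolynomial ℕ k) :
    w ∈ minGens (pathCoverIdeal k N) ↔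
      ∃ d, Minimal (IsPathCover N) d ∧ w = monomial d 1 := by
  have hiff (d : ℕ →₀ ℕ) : monomial d (1 : k) ∈ minGens (pathCoverIdeal k N) ↔
      Minimal (IsPathCover N) d := by
    simp only [monomial_mem_minGens_iff, monomial_mem_pathCoverIdeal_iff_s3]
  constructor
  · intro hw
    obtain ⟨d, rfl⟩ := hw.1
    exact ⟨d, (hiff d).mp hw, rfl⟩
  · rintro ⟨d, hd, rfl⟩
    exact (hiff d).mpr hd

theorem Minimal.isPathCover_apply_le {N : ℕ} {d : ℕ →₀ ℕ} (hd : Minimal (IsPathCover N) d)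
    (j : ℕ) : d j ≤ if j ∈ Finset.Icc 1 N then 1 else 0 := by
  classical
  let f : ℕ →₀ ℕ := Finsupp.mapRange (min · 1) (by simp) (d.filter (· ∈ Finset.Icc 1 N))
  have hf : ∀ i, f i = if i ∈ Finset.Icc 1 N then min (d i) 1 else 0 := fun i => by
    simp only [f, Finsupp.mapRange_apply, Finsupp.filter_apply]
    split_ifs <;> simp
  have hcover : IsPathCover N f := fun i hi => by
    simp only [Finset.mem_Icc] at hi
    simp only [hf, Finset.mem_Icc]
    rcases hd.1 i (Finset.mem_Icc.mpr hi) with h | h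
    · left; rw [if_pos (by omega)]; omega
    · right; rw [if_pos (by omega)]; omega
  have hle : f ≤ d := fun i => by rw [hf]; split_ifs <;> omega
  have := hd.2 hcover hle j
  rw [hf] at this
  split_ifs at this ⊢ <;> omega

theorem Minimal.isPathCover_apply_le_one {N : ℕ} {d : ℕ →₀ ℕ}
    (hd : Minimal (IsPathCover N) d) (j : ℕ) : d j ≤ 1 := by
  have := hd.isPathCover_apply_le j
  split_ifs at this <;> omega

theorem Minimal.isPathCover_apply_eq_zero {N : ℕ} {d : ℕ →₀ ℕ}
    (hd : Minimal (IsPathCover N) d) {j : ℕ} (hj : N < j) : d j = 0 := by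
  have := hd.isPathCover_apply_le j
  rwa [if_neg (by simp; omega), Nat.le_zero] at this

theorem Minimal.isPathCover_apply_last_eq_zero {m : ℕ} {d : ℕ →₀ ℕ}
    (hd : Minimal (IsPathCover (m + 3)) d) (h : d (m + 2) ≠ 0) : d (m + 3) = 0 := by
  have hcover : IsPathCover (m + 3) (d.erase (m + 3)) := fun i hi => by
    simp only [Finset.mem_Icc] at hi
    simp only [Finsupp.erase_apply]
    rcases hd.1 i (Finset.mem_Icc.mpr hi) with h' | h'
    · left; rwa [if_neg (by omega)]
    · by_cases hi : i = m + 2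
      · subst hi; left; rwa [if_neg (by omega)]
      · right; rwa [if_neg (by omega)]
  have := hd.2 hcover (fun i => by rw [Finsupp.erase_apply]; split_ifs <;> simp) (m + 3)
  simpa using this

theorem IsPathCover.add_single {m : ℕ} {f : ℕ →₀ ℕ} (hf : IsPathCover (m + 1) f) :
    IsPathCover (m + 3) (f + Finsupp.single (m + 2) 1) := fun i hi => by
  simp only [Finset.mem_Icc] at hi
  simp only [Finsupp.add_apply, Finsupp.single_apply]
  by_cases him : i ≤ m
  · rcases hf i (Finset.mem_Icc.mpr ⟨hi.1, by omega⟩) with h | h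
    · left; omega
    · right; omega
  · obtain rfl | rfl : i = m + 1 ∨ i = m + 2 := by omega
    · right; simp
    · left; simp

theorem minimal_isPathCover_add_single_iff {m : ℕ} {u : ℕ →₀ ℕ} (hu : u (m + 3) = 0) :
    Minimal (IsPathCover (m + 1)) u ↔
      Minimal (IsPathCover (m + 3)) (u + Finsupp.single (m + 2) 1) := by
  refine minimal_iff_minimal_add (fun f hf => hf.add_single) fun g hgu hg => ?_
  have hg3 : g (m + 3) = 0 := by
    have := hgu (m + 3)
    rw [Finsupp.add_apply, hu, Finsupp.single_eq_of_ne (by omega)] at this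
    omega
  have hg2 : Finsupp.single (m + 2) 1 ≤ g := by
    rw [Finsupp.single_le_iff]
    have : g (m + 2) ≠ 0 ∨ g (m + 3) ≠ 0 := hg (m + 2) (by simp)
    omega
  refine ⟨g - Finsupp.single (m + 2) 1, (tsub_add_cancel_of_le hg2).symm, fun i hi => ?_⟩
  simp only [Finset.mem_Icc] at hi
  simp only [Finsupp.tsub_apply, Finsupp.single_apply, if_neg (show m + 2 ≠ i by omega),
    if_neg (show m + 2 ≠ i + 1 by omega), tsub_zero]
  exact hg i (by simp; omega)

theorem Minimal.exists_isPathCover_add_single {m : ℕ} {d : ℕ →₀ ℕ}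
    (hd : Minimal (IsPathCover (m + 3)) d) (h : d (m + 2) ≠ 0) :
    ∃ e, Minimal (IsPathCover (m + 1)) e ∧ d = e + Finsupp.single (m + 2) 1 := by
  have hle : Finsupp.single (m + 2) 1 ≤ d :=
    Finsupp.single_le_iff.mpr (Nat.one_le_iff_ne_zero.mpr h)
  have hsplit := tsub_add_cancel_of_le hle
  refine ⟨d - Finsupp.single (m + 2) 1, ?_, hsplit.symm⟩
  have h3 : (d - Finsupp.single (m + 2) 1 : ℕ →₀ ℕ) (m + 3) = 0 := by
    simp [hd.isPathCover_apply_last_eq_zero h]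
  rwa [minimal_isPathCover_add_single_iff h3, hsplit]

theorem mem_sFold_pathCoverIdeal_iff (N s : ℕ) (U : MvPolynomial ℕ k) :
    U ∈ sFold (pathCoverIdeal k N) s ↔ ∃ E : List (ℕ →₀ ℕ), E.length = s ∧
      (∀ e ∈ E, Minimal (IsPathCover N) e) ∧ U = monomial E.sum 1 := by
  constructor
  · rintro ⟨L, rfl, hL, rfl⟩
    induction L with
    | nil => exact ⟨[], rfl, by simp, by simp⟩
    | cons w L ih =>
      rw [List.forall_mem_cons] at hL
      obtain ⟨E, hE, hEmin, hEL⟩ := ih hL.2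
      obtain ⟨d, hd, rfl⟩ := (mem_minGens_pathCoverIdeal_iff N w).mp hL.1
      refine ⟨d :: E, by simp [hE], List.forall_mem_cons.mpr ⟨hd, hEmin⟩, ?_⟩
      rw [List.prod_cons, hEL, List.sum_cons, monomial_mul, one_mul]
  · rintro ⟨E, rfl, hE, rfl⟩
    refine ⟨E.map (monomial · 1), by simp, ?_, ?_⟩
    · simp only [List.mem_map, forall_exists_index, and_imp, forall_apply_eq_imp_iff₂]
      exact fun e he => (mem_minGens_pathCoverIdeal_iff N _).mpr ⟨e, hE e he, rfl⟩
    · exact (list_prod_map_monomial_one E).symm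

theorem exists_monomial_of_mem_sFold_pathCoverIdeal {N s : ℕ} {U : MvPolynomial ℕ k}
    (hU : U ∈ sFold (pathCoverIdeal k N) s) :
    ∃ u : ℕ →₀ ℕ, U = monomial u 1 ∧ ∀ j, N < j → u j = 0 := by
  obtain ⟨E, -, hE, rfl⟩ := (mem_sFold_pathCoverIdeal_iff N s U).mp hU
  refine ⟨E.sum, rfl, fun j hj => ?_⟩
  rw [← Finsupp.applyAddHom_apply, map_list_sum]
  exact List.sum_eq_zero fun x hx => by
    obtain ⟨e, he, rfl⟩ := List.mem_map.mp hx
    exact (hE e he).isPathCover_apply_eq_zero hj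

theorem X_pow_mul_mem_sFold_iff (m s : ℕ) (U : MvPolynomial ℕ k) :
    (X (m + 2) : MvPolynomial ℕ k) ^ s * U ∈ sFold (pathCoverIdeal k (m + 3)) s ↔
      U ∈ sFold (pathCoverIdeal k (m + 1)) s := by
  simp only [mem_sFold_pathCoverIdeal_iff]
  constructor
  · rintro ⟨E', hlen, hE', hU⟩
    have hs : Finsupp.single (m + 2) s ≤ E'.sum := by
      have : monomial (Finsupp.single (m + 2) s) (1 : k) ∣ monomial E'.sum 1 :=
        ⟨U, by rw [← X_pow_eq_monomial, hU]⟩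
      exact (monomial_dvd_monomial.mp this).1.resolve_left one_ne_zero
    -- each factor has `x_{m+2}`-degree at most one, and together they have degree at least `s`
    have hone : ∀ e ∈ E', e (m + 2) = 1 := by
      have hsum : (E'.map (· (m + 2))).sum = E'.sum (m + 2) := by
        rw [← Finsupp.applyAddHom_apply, map_list_sum]; rfl
      simpa using List.eq_one_of_length_le_sum (l := E'.map (· (m + 2)))
        (by simpa using fun e he => (hE' e he).isPathCover_apply_le_one (m + 2))
        (by rw [List.length_map, hlen, hsum]; exact Finsupp.single_le_iff.mp hs)
    have hsplit : ∀ e ∈ E', Minimal (IsPathCover (m + 1)) (e - Finsupp.single (m + 2) 1) ∧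
        e - Finsupp.single (m + 2) 1 + Finsupp.single (m + 2) 1 = e := fun e he => by
      obtain ⟨f, hf, rfl⟩ := (hE' e he).exists_isPathCover_add_single (by simp [hone e he])
      simpa using hf
    set E := E'.map (· - Finsupp.single (m + 2) 1)
    have hE : E.map (· + Finsupp.single (m + 2) 1) = E' := by
      rw [List.map_map]
      exact (List.map_congr_left fun e he => (hsplit e he).2).trans (List.map_id E')
    refine ⟨E, by simp [E, hlen], by simpa [E] using fun e he => (hsplit e he).1, ?_⟩
    apply mul_left_cancel₀ (pow_ne_zero s (X_ne_zero (m + 2)))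
    rw [hU, X_pow_mul_monomial, ← hE, sum_map_add_single]
    simp [E, hlen]
  · rintro ⟨E, rfl, hE, rfl⟩
    refine ⟨E.map (· + Finsupp.single (m + 2) 1), by simp, ?_,
      by rw [X_pow_mul_monomial, sum_map_add_single]⟩
    simp only [List.mem_map, forall_exists_index, and_imp, forall_apply_eq_imp_iff₂]
    exact fun e he => (minimal_isPathCover_add_single_iff
      ((hE e he).isPathCover_apply_eq_zero (by omega))).mp (hE e he)

theorem mem_pathCoverIdeal_of_X_mul_mem {N l : ℕ} (hl : N < l) {q : MvPolynomial ℕ k}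
    (h : X l * q ∈ pathCoverIdeal k N) : q ∈ pathCoverIdeal k N := by
  simp only [pathCoverIdeal, Ideal.mem_iInf, Finset.mem_Icc] at h ⊢
  exact fun i hi => mem_span_X_pair_of_X_mul_mem (by omega) (by omega) (h i hi)

theorem X_mul_mem_pathCoverIdeal {m : ℕ} {p : MvPolynomial ℕ k}
    (hp : p ∈ pathCoverIdeal k (m + 1)) :
    X (m + 2) * p ∈ pathCoverIdeal k (m + 3) := by
  simp only [pathCoverIdeal, Ideal.mem_iInf, Finset.mem_Icc] at hp ⊢
  intro i hi
  by_cases him : i ≤ m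
  · exact Ideal.mul_mem_left _ _ (hp i ⟨hi.1, by omega⟩)
  · obtain rfl | rfl : i = m + 1 ∨ i = m + 2 := by omega
    · exact Ideal.mul_mem_right _ _ (Ideal.subset_span (by simp))
    · exact Ideal.mul_mem_right _ _ (Ideal.subset_span (by simp))

theorem X_pow_mul_mem_pathCoverIdeal_pow {m s : ℕ} {p : MvPolynomial ℕ k}
    (hp : p ∈ pathCoverIdeal k (m + 1) ^ s) :
    X (m + 2) ^ s * p ∈ pathCoverIdeal k (m + 3) ^ s := by
  have hle : Ideal.span {X (m + 2)} * pathCoverIdeal k (m + 1) ≤ pathCoverIdeal k (m + 3) :=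
    Ideal.mul_le.mpr fun r hr p hp => by
      obtain ⟨a, rfl⟩ := Ideal.mem_span_singleton'.mp hr
      rw [mul_assoc]
      exact Ideal.mul_mem_left _ a (X_mul_mem_pathCoverIdeal hp)
  refine Ideal.pow_right_mono hle s ?_
  rw [mul_pow, Ideal.span_singleton_pow]
  exact Ideal.mul_mem_mul (Ideal.mem_span_singleton_self _) hp

theorem map_killX_pathCoverIdeal_le (m : ℕ) :
    (pathCoverIdeal k (m + 3)).map (killX (m + 3)) ≤
      Ideal.span {X (m + 2)} * pathCoverIdeal k (m + 1) := by
  have hspan (i j : ℕ) {p : MvPolynomial ℕ k} (hp : p ∈ Ideal.span {X i, X j}) :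
      killX (m + 3) p ∈ Ideal.span {killX (m + 3) (X i), killX (m + 3) (X j)} := by
    rw [← Set.image_pair, ← Ideal.map_span]
    exact Ideal.mem_map_of_mem _ hp
  rw [Ideal.map_le_iff_le_comap]
  intro p hp
  simp only [pathCoverIdeal, Ideal.mem_iInf, Finset.mem_Icc] at hp
  have hX : killX (m + 3) p ∈ Ideal.span {X (m + 2)} := by
    have := hspan _ _ (hp (m + 2) (by omega))
    rwa [killX_X_of_ne (by omega), killX_X_self, Ideal.span_pair_zero] at this
  obtain ⟨q, hq⟩ := Ideal.mem_span_singleton'.mp hX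
  rw [Ideal.mem_comap, ← hq, mul_comm q]
  refine Ideal.mul_mem_mul (Ideal.mem_span_singleton_self _)
    (mem_pathCoverIdeal_of_X_mul_mem (show m + 1 < m + 2 by omega) ?_)
  simp only [pathCoverIdeal, Ideal.mem_iInf, Finset.mem_Icc]
  intro i hi
  have := hspan _ _ (hp i (by omega))
  rwa [killX_X_of_ne (by omega), killX_X_of_ne (by omega), ← hq, mul_comm] at this

theorem exists_of_monomial_mem_pathCoverIdeal_pow {m s : ℕ} {g : ℕ →₀ ℕ}
    (hg3 : g (m + 3) = 0) (hg : monomial g (1 : k) ∈ pathCoverIdeal k (m + 3) ^ s) :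
    ∃ f, g = f + Finsupp.single (m + 2) s ∧
      monomial f (1 : k) ∈ pathCoverIdeal k (m + 1) ^ s := by
  have hmem :
      monomial g (1 : k) ∈ Ideal.span {X (m + 2) ^ s} * pathCoverIdeal k (m + 1) ^ s := by
    rw [← Ideal.span_singleton_pow, ← mul_pow, ← killX_monomial hg3]
    refine Ideal.pow_right_mono (map_killX_pathCoverIdeal_le m) s ?_
    rw [← Ideal.map_pow]
    exact Ideal.mem_map_of_mem _ hg
  obtain ⟨q, hq, hqg⟩ := Ideal.mem_span_singleton_mul.mp hmem
  have hle : Finsupp.single (m + 2) s ≤ g := by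
    have : monomial (Finsupp.single (m + 2) s) (1 : k) ∣ monomial g 1 :=
      ⟨q, by rw [← X_pow_eq_monomial, hqg]⟩
    exact (monomial_dvd_monomial.mp this).1.resolve_left one_ne_zero
  refine ⟨g - Finsupp.single (m + 2) s, (tsub_add_cancel_of_le hle).symm, ?_⟩
  convert hq
  apply mul_left_cancel₀ (pow_ne_zero s (X_ne_zero (m + 2)))
  rw [X_pow_mul_monomial, tsub_add_cancel_of_le hle, hqg]

theorem minimal_pathCoverIdeal_pow_add_single_iff {m s : ℕ} {u : ℕ →₀ ℕ}
    (hu : u (m + 3) = 0) :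
    Minimal (fun f => monomial f (1 : k) ∈ pathCoverIdeal k (m + 1) ^ s) u ↔
      Minimal (fun g => monomial g (1 : k) ∈ pathCoverIdeal k (m + 3) ^ s)
        (u + Finsupp.single (m + 2) s) := by
  refine minimal_iff_minimal_add (fun f hf => ?_) fun g hgu hg => ?_
  · rw [← X_pow_mul_monomial]
    exact X_pow_mul_mem_pathCoverIdeal_pow hf
  · refine exists_of_monomial_mem_pathCoverIdeal_pow ?_ hg
    have := hgu (m + 3)
    rw [Finsupp.add_apply, hu, Finsupp.single_eq_of_ne (by omega)] at this
    omega

theorem rootedList_add_three (m : ℕ) : ∃ T, rootedList k (m + 3) =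
    (rootedList k (m + 1)).map (X (m + 2) * ·) ++ T ∧ ∀ t ∈ T, X (m + 3) ∣ t := by
  cases m with
  | zero => exact ⟨[X 1 * X 3], by simp [rootedList], by simp⟩
  | succ m =>
    refine ⟨_, rfl, ?_⟩
    simp only [List.mem_map, forall_exists_index, and_imp, forall_apply_eq_imp_iff₂]
    exact fun u _ => ⟨X (m + 2) * u, by ring⟩

theorem isExprOn_map_mul_append_iff {L T : List (MvPolynomial ℕ k)}
    {W Y M : MvPolynomial ℕ k} {s : ℕ} {a : ℕ → ℕ} (hW : W ≠ 0) (hT : ∀ t ∈ T, Y ∣ t)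
    (hY : ¬Y ∣ W ^ s * M) :
    IsExprOn (L.map (W * ·) ++ T) s a (W ^ s * M) ↔ IsExprOn L s a M := by
  set r := L.length
  have hlen : (L.map (W * ·) ++ T).length = r + T.length := by simp [r]
  have hget (i : ℕ) (hi : i < r) : (L.map (W * ·) ++ T).getD i 1 = W * L.getD i 1 := by
    rw [List.getD_append _ _ _ _ (by simpa using hi),
      List.getD_eq_getElem _ _ (by simpa using hi), List.getElem_map, List.getD_eq_getElem _ _ hi]
  have hsum (ha : ∀ i, r ≤ i → a i = 0) :
      ∑ i ∈ Finset.range (r + T.length), a i = ∑ i ∈ Finset.range r, a i := by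
    rw [Finset.sum_range_add,
      Finset.sum_eq_zero (s := Finset.range T.length) fun j _ => ha _ (by omega), add_zero]
  have hprod (ha : ∀ i, r ≤ i → a i = 0) :
      ∏ i ∈ Finset.range (r + T.length), (L.map (W * ·) ++ T).getD i 1 ^ a i =
        W ^ (∑ i ∈ Finset.range r, a i) * ∏ i ∈ Finset.range r, L.getD i 1 ^ a i := by
    rw [Finset.prod_range_add,
      Finset.prod_eq_one (s := Finset.range T.length) fun j _ => by rw [ha _ (by omega), pow_zero],
      mul_one, ← Finset.prod_pow_eq_pow_sum, ← Finset.prod_mul_distrib]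
    exact Finset.prod_congr rfl fun i hi => by rw [hget i (Finset.mem_range.mp hi), mul_pow]
  rw [IsExprOn, IsExprOn, hlen]
  constructor
  · rintro ⟨h0, hs, hM⟩
    -- a factor from `T` would make `Y` divide the product
    have ha : ∀ i, r ≤ i → a i = 0 := by
      intro i hi
      by_contra hai
      refine hY (hM ▸ (dvd_pow ?_ hai).trans (Finset.dvd_prod_of_mem _
        (Finset.mem_range.mpr (lt_of_not_ge fun h => hai (h0 i h)))))
      have hiT : i - r < T.length := by have := lt_of_not_ge fun h => hai (h0 i h); omega
      rw [List.getD_append_right _ _ _ _ (by simpa using hi), List.length_map,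
        List.getD_eq_getElem _ _ hiT]
      exact hT _ (List.getElem_mem hiT)
    refine ⟨ha, by rwa [hsum ha] at hs, ?_⟩
    apply mul_left_cancel₀ (pow_ne_zero s hW)
    rw [hM, hprod ha, ← hsum ha, hs]
  · rintro ⟨ha, hs, rfl⟩
    exact ⟨fun i hi => ha i (by omega), by rw [hsum ha, hs], by rw [hprod ha, hs]⟩

theorem isMaxExpr_map_mul_append_iff {L T : List (MvPolynomial ℕ k)}
    {W Y M : MvPolynomial ℕ k} {s : ℕ} {a : ℕ → ℕ} (hW : W ≠ 0) (hT : ∀ t ∈ T, Y ∣ t)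
    (hY : ¬Y ∣ W ^ s * M) :
    IsMaxExpr (L.map (W * ·) ++ T) s a (W ^ s * M) ↔ IsMaxExpr L s a M := by
  simp only [IsMaxExpr, isExprOn_map_mul_append_iff hW hT hY]

theorem rootedGt_map_mul_append_iff {L T : List (MvPolynomial ℕ k)}
    {W Y M N : MvPolynomial ℕ k} {s : ℕ} (hW : W ≠ 0) (hT : ∀ t ∈ T, Y ∣ t)
    (hYM : ¬Y ∣ W ^ s * M) (hYN : ¬Y ∣ W ^ s * N) :
    rootedGt (L.map (W * ·) ++ T) s (W ^ s * M) (W ^ s * N) ↔ rootedGt L s M N := by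
  simp only [rootedGt, isMaxExpr_map_mul_append_iff hW hT hYM,
    isMaxExpr_map_mul_append_iff hW hT hYN]

end

theorem pure_sFold_xnm1_general (k : Type*) [Field k] (n s : ℕ) (hn : 3 ≤ n)
    (U V : MvPolynomial ℕ k) :
    ((U ∈ sFold (pathCoverIdeal k (n - 2)) s ∧ V ∈ sFold (pathCoverIdeal k (n - 2)) s) ↔
      ((X (n - 1) : MvPolynomial ℕ k) ^ s * U ∈ sFold (pathCoverIdeal k n) s ∧
        (X (n - 1) : MvPolynomial ℕ k) ^ s * V ∈ sFold (pathCoverIdeal k n) s)) ∧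
    (U ∈ sFold (pathCoverIdeal k (n - 2)) s → V ∈ sFold (pathCoverIdeal k (n - 2)) s →
      ((rootedGt (rootedList k (n - 2)) s U V ↔
          rootedGt (rootedList k n) s
            ((X (n - 1) : MvPolynomial ℕ k) ^ s * U)
            ((X (n - 1) : MvPolynomial ℕ k) ^ s * V)) ∧
       (U ∈ minGens ((pathCoverIdeal k (n - 2)) ^ s) ↔
          (X (n - 1) : MvPolynomial ℕ k) ^ s * U ∈ minGens ((pathCoverIdeal k n) ^ s)))) := by
  obtain ⟨m, rfl⟩ : ∃ m, n = m + 3 := ⟨n - 3, by omega⟩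
  rw [show m + 3 - 1 = m + 2 from rfl, show m + 3 - 2 = m + 1 from rfl]
  refine ⟨and_congr (X_pow_mul_mem_sFold_iff m s U).symm (X_pow_mul_mem_sFold_iff m s V).symm,
    fun hU hV => ?_⟩
  obtain ⟨u, rfl, hu⟩ := exists_monomial_of_mem_sFold_pathCoverIdeal hU
  obtain ⟨v, rfl, hv⟩ := exists_monomial_of_mem_sFold_pathCoverIdeal hV
  obtain ⟨T, hR, hT⟩ := rootedList_add_three (k := k) m
  constructor
  · rw [hR, rootedGt_map_mul_append_iff (X_ne_zero _) hT
      (X_not_dvd_X_pow_mul_monomial (by omega) (hu _ (by omega)))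
      (X_not_dvd_X_pow_mul_monomial (by omega) (hv _ (by omega)))]
  · rw [X_pow_mul_monomial, monomial_mem_minGens_iff, monomial_mem_minGens_iff]
    exact minimal_pathCoverIdeal_pow_add_single_iff (hu _ (by omega))

/-- (Pure s-fold products divisible by `x_{n-1}^s`.) For `n ≥ 3` and
`s ≥ 1`: `U, V ∈ F(J(P_{n-2})^s)` iff `x_{n-1}^s U, x_{n-1}^s V ∈ F(J(P_n)^s)`; and in
that case (1) `U >_R V` iff `x_{n-1}^s U >_R x_{n-1}^s V`, and (2) `U ∈ G(J(P_{n-2})^s)`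
iff `x_{n-1}^s U ∈ G(J(P_n)^s)`. -/
theorem pure_sFold_xnm1 (k : Type*) [Field k] (n s : ℕ) (hn : 3 ≤ n) (hs : 1 ≤ s)
    (U V : MvPolynomial ℕ k) :
    ((U ∈ sFold (pathCoverIdeal k (n - 2)) s ∧ V ∈ sFold (pathCoverIdeal k (n - 2)) s) ↔
      ((X (n - 1) : MvPolynomial ℕ k) ^ s * U ∈ sFold (pathCoverIdeal k n) s ∧
        (X (n - 1) : MvPolynomial ℕ k) ^ s * V ∈ sFold (pathCoverIdeal k n) s)) ∧
    (U ∈ sFold (pathCoverIdeal k (n - 2)) s → V ∈ sFold (pathCoverIdeal k (n - 2)) s →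
      ((rootedGt (rootedList k (n - 2)) s U V ↔
          rootedGt (rootedList k n) s
            ((X (n - 1) : MvPolynomial ℕ k) ^ s * U)
            ((X (n - 1) : MvPolynomial ℕ k) ^ s * V)) ∧
       (U ∈ minGens ((pathCoverIdeal k (n - 2)) ^ s) ↔
          (X (n - 1) : MvPolynomial ℕ k) ^ s * U ∈ minGens ((pathCoverIdeal k n) ^ s)))) :=
  pure_sFold_xnm1_general k n s hn U V
end
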